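/- arXiv:0801.2486 — 7 statements merged into one kernel-verified Lean document; each statement's English description precedes it below -/
import Mathlib

section
/- There exists a separable metric space V such that every bounded separable metric space admits a distance-preserving map into V, but there is no distance-preserving map from ℝ (with its usual metric) into V. -/
universe u

/-!
Every separable metric space `M` embeds isometrically into `C(ℕ → Bool, ℝ)`: the 1-Lipschitz
functions vanishing at a base point form, under pointwise convergence, a compact metrizable space
`K`, hence a continuous image of the Cantor space, and `x ↦ (f ↦ f x)` is an isometry `M → C(K, ℝ)`
since `dist x ·` (shifted) lies in `K`. Take `V = {(n, f) | ‖f‖ ≤ n} ⊆ ℕ × C(ℕ → Bool, ℝ)`.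
A bounded space, translated so that a base point goes to `0`, lands in a single layer `n`.
Conversely, along an isometric copy of the connected line `ℝ` the layer index, a continuous map to
the discrete space `ℕ`, is constant, so the copy would be bounded.
-/

open TopologicalSpace

section LipschitzFunctions

variable {M : Type*} [PseudoMetricSpace M]

def lipschitzVanishingAt (x₀ : M) : Set (M → ℝ) := {f | LipschitzWith 1 f ∧ f x₀ = 0}

lemma dist_sub_dist_mem_lipschitzVanishingAt (x₀ x : M) :
    (fun z => dist x z - dist x x₀) ∈ lipschitzVanishingAt x₀ :=
  ⟨LipschitzWith.of_dist_le_mul fun a b => by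
    simpa [Real.dist_eq, dist_comm x] using abs_dist_sub_le a b x, sub_self _⟩

lemma abs_le_dist_of_mem_lipschitzVanishingAt {x₀ : M} {f : M → ℝ}
    (hf : f ∈ lipschitzVanishingAt x₀) (x : M) : |f x| ≤ dist x x₀ := by
  simpa [hf.2, Real.dist_eq] using hf.1.dist_le_mul x x₀

lemma isCompact_lipschitzVanishingAt (x₀ : M) : IsCompact (lipschitzVanishingAt x₀) := by
  refine (isCompact_univ_pi fun x => isCompact_Icc (a := -dist x x₀) (b := dist x x₀))
    |>.of_isClosed_subset ?_ fun f hf x _ => abs_le.1 (abs_le_dist_of_mem_lipschitzVanishingAt hf x)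
  exact (isClosed_setOfPred_lipschitzWith 1).inter
    (isClosed_eq (continuous_apply x₀) continuous_const)

instance (x₀ : M) : CompactSpace (lipschitzVanishingAt x₀) :=
  isCompact_iff_compactSpace.mp (isCompact_lipschitzVanishingAt x₀)

instance (x₀ : M) : Nonempty (lipschitzVanishingAt x₀) :=
  ⟨⟨0, LipschitzWith.const' 0, rfl⟩⟩

instance [SeparableSpace M] (x₀ : M) : MetrizableSpace (lipschitzVanishingAt x₀) := by
  have : Nonempty M := ⟨x₀⟩
  obtain ⟨s, hs⟩ := exists_dense_seq M
  let restrict : lipschitzVanishingAt x₀ → ℕ → ℝ := fun f n => f.1 (s n)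
  have hcont : Continuous restrict :=
    continuous_pi fun n => (continuous_apply (s n)).comp continuous_subtype_val
  have hinj : restrict.Injective := fun f g hfg =>
    Subtype.ext (hs.equalizer f.2.1.continuous g.2.1.continuous (funext fun n => congrFun hfg n))
  exact (hcont.isClosedEmbedding hinj).isEmbedding.metrizableSpace

end LipschitzFunctions

theorem exists_isometry_continuousMap_cantor (M : Type*) [PseudoMetricSpace M]
    [SeparableSpace M] :
    ∃ j : M → C(ℕ → Bool, ℝ), Isometry j := by
  rcases isEmpty_or_nonempty M with _ | ⟨⟨x₀⟩⟩
  · exact ⟨isEmptyElim, fun x => isEmptyElim x⟩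
  let := metrizableSpaceMetric (lipschitzVanishingAt x₀)
  obtain ⟨g, hg, hgs⟩ := exists_nat_bool_continuous_surjective_of_compact (lipschitzVanishingAt x₀)
  let j : M → C(ℕ → Bool, ℝ) := fun x =>
    ⟨fun c => (g c).1 x, (continuous_apply x).comp (continuous_subtype_val.comp hg)⟩
  refine ⟨j, Isometry.of_dist_eq fun x y => le_antisymm ?_ ?_⟩
  · exact (ContinuousMap.dist_le dist_nonneg).2 fun c => by
      simpa [j] using (g c).2.1.dist_le_mul x y
  · obtain ⟨c, hc⟩ := hgs ⟨_, dist_sub_dist_mem_lipschitzVanishingAt x₀ x⟩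
    calc dist x y = dist (j x c) (j y c) := by simp [j, hc, Real.dist_eq]
      _ ≤ dist (j x) (j y) := ContinuousMap.dist_apply_le_dist c

def layers (E : Type*) [SeminormedAddCommGroup E] : Set (ℕ × E) := {p | ‖p.2‖ ≤ p.1}

section Layers

variable {E : Type*} [SeminormedAddCommGroup E]

theorem exists_isometry_layers_of_bounded {M : Type*} [PseudoMetricSpace M] {j : M → E}
    (hj : Isometry j) (hb : ∃ C : ℝ, ∀ x y : M, dist x y ≤ C) :
    ∃ k : M → layers E, Isometry k := by
  rcases isEmpty_or_nonempty M with _ | ⟨⟨x₀⟩⟩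
  · exact ⟨isEmptyElim, fun x => isEmptyElim x⟩
  obtain ⟨C, hC⟩ := hb
  obtain ⟨n, hn⟩ := exists_nat_ge C
  refine ⟨fun x => ⟨(n, j x - j x₀), ?_⟩, Isometry.of_dist_eq fun x y => ?_⟩
  · change ‖j x - j x₀‖ ≤ n
    simpa [← dist_eq_norm, hj.dist_eq] using (hC x x₀).trans hn
  · simp [Subtype.dist_eq, Prod.dist_eq, hj.dist_eq]

theorem not_exists_isometry_real_layers : ¬ ∃ j : ℝ → layers E, Isometry j := by
  rintro ⟨j, hj⟩
  have hlayer : ∀ t, (j t).1.1 = (j 0).1.1 := fun t =>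
    PreconnectedSpace.constant inferInstance
      (continuous_fst.comp (continuous_subtype_val.comp hj.continuous))
  set n := (j 0).1.1
  have hnorm : ∀ t, ‖(j t).1.2‖ ≤ n := fun t => hlayer t ▸ (j t).2
  have : (2 * n + 1 : ℝ) ≤ n + n :=
    calc (2 * n + 1 : ℝ) = dist (j (2 * n + 1)) (j 0) := by
          rw [hj.dist_eq, Real.dist_eq, sub_zero, abs_of_nonneg (by positivity)]
      _ = dist (j (2 * n + 1)).1.2 (j 0).1.2 := by simp [Subtype.dist_eq, Prod.dist_eq, hlayer]
      _ ≤ ‖(j (2 * n + 1)).1.2‖ + ‖(j 0).1.2‖ := dist_le_norm_add_norm _ _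
      _ ≤ n + n := add_le_add (hnorm _) (hnorm _)
  linarith

end Layers

/-- There exists a separable metric space `V` such that every bounded
separable metric space embeds isometrically into `V`, but `ℝ` does not embed isometrically
into `V`. -/
theorem stmt6 :
    ∃ (V : Type) (mV : MetricSpace V),
      @TopologicalSpace.SeparableSpace V mV.toUniformSpace.toTopologicalSpace ∧
      (∀ (M : Type u) (mM : MetricSpace M),
        @TopologicalSpace.SeparableSpace M mM.toUniformSpace.toTopologicalSpace →
        (∃ C : ℝ, ∀ x y : M, @dist M mM.toDist x y ≤ C) →
        ∃ j : M → V, @Isometry M V mM.toPseudoEMetricSpace mV.toPseudoEMetricSpace j) ∧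
      ¬ ∃ j : ℝ → V, @Isometry ℝ V _ mV.toPseudoEMetricSpace j := by
  refine ⟨layers C(ℕ → Bool, ℝ), inferInstance, inferInstance, fun M _ _ hb => ?_,
    not_exists_isometry_real_layers⟩
  obtain ⟨j, hj⟩ := exists_isometry_continuousMap_cantor M
  exact exists_isometry_layers_of_bounded hj hb
end

section
/- There exists a compact subset K of ℓ₁ such that for every real Banach space Y, if there exists a distance-preserving map from K into Y, then there exists a linear isometric embedding of ℓ₁ into Y. -/
/-!
`K` is the cube `{x ∈ ℓ₁ : |x i| = 2⁻ⁱ}`, a continuous image of the Cantor space `ℕ → Bool`.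
Every vertex `σ` of the cube lies metrically between any two antipodal vertices `ε` and `-ε`, so
if `J` is an isometric copy of the cube and `f` is a functional of norm `≤ 1` attaining its norm
on `J ε - J (-ε)`, then `f (J ε - J σ) = d(ε, σ)` for all `σ`. For the normalized edges `y i`
at a fixed vertex this gives `f (y i) = ±1` with the signs `ε i` prescribed at will. Taking `ε`
to be the sign pattern of `x ∈ ℓ₁` shows `‖∑ x i • y i‖ ≥ f (∑ x i • y i) = ∑ |x i|`, so
`x ↦ ∑ x i • y i` is a linear isometry.
-/

open scoped lp

section NormingFunctional

variable {E : Type*} [SeminormedAddCommGroup E] [NormedSpace ℝ E] {f : StrongDual ℝ E}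

theorem ContinuousLinearMap.apply_le_norm_of_norm_le_one (hf : ‖f‖ ≤ 1) (x : E) : f x ≤ ‖x‖ :=
  (le_abs_self _).trans <| by simpa using f.le_of_opNorm_le hf x

theorem ContinuousLinearMap.apply_sub_eq_dist_of_dist_add_dist_eq (hf : ‖f‖ ≤ 1) {a b c : E}
    (habc : dist a b + dist b c = dist a c) (hac : f (a - c) = dist a c) :
    f (a - b) = dist a b := by
  have hab := f.apply_le_norm_of_norm_le_one hf (a - b)
  have hbc := f.apply_le_norm_of_norm_le_one hf (b - c)
  have hsplit : f (a - b) + f (b - c) = f (a - c) := by rw [← map_add, sub_add_sub_cancel]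
  simp only [dist_eq_norm] at habc hac ⊢
  linarith

end NormingFunctional

noncomputable def signOf (b : Bool) : ℝ := if b then 1 else -1

theorem abs_signOf (b : Bool) : |signOf b| = 1 := by cases b <;> simp [signOf]

theorem mul_signOf_decide_nonneg (r : ℝ) : r * signOf (decide (0 ≤ r)) = |r| := by
  by_cases hr : 0 ≤ r
  · simp [signOf, hr, abs_of_nonneg hr]
  · simp [signOf, hr, abs_of_neg (not_le.mp hr)]

theorem lp.norm_eq_tsum_norm_of_one {ι E : Type*} [NormedAddCommGroup E] (x : ℓ¹(ι, E)) :
    ‖x‖ = ∑' i, ‖x i‖ := by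
  simp [lp.norm_eq_tsum_rpow (p := 1) (by simp)]

theorem lp.summable_norm_of_one {ι E : Type*} [NormedAddCommGroup E] (x : ℓ¹(ι, E)) :
    Summable fun i => ‖x i‖ := by
  simpa using (lp.memℓp x).summable (by simp)

section Synthesis

variable {ι Y : Type*} [NormedAddCommGroup Y] [NormedSpace ℝ Y] {y : ι → Y}

theorem norm_smul_le_of_norm_le_one (hy : ∀ i, ‖y i‖ ≤ 1) (x : ℓ¹(ι, ℝ)) (i : ι) :
    ‖x i • y i‖ ≤ ‖x i‖ := by
  simpa [norm_smul] using mul_le_of_le_one_right (norm_nonneg (x i)) (hy i)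

variable [CompleteSpace Y]

theorem summable_smul_of_norm_le_one (hy : ∀ i, ‖y i‖ ≤ 1) (x : ℓ¹(ι, ℝ)) :
    Summable fun i => x i • y i :=
  .of_norm_bounded (lp.summable_norm_of_one x) (norm_smul_le_of_norm_le_one hy x)

noncomputable def l1Synthesis (hy : ∀ i, ‖y i‖ ≤ 1) : ℓ¹(ι, ℝ) →ₗ[ℝ] Y where
  toFun x := ∑' i, x i • y i
  map_add' x z := by
    simp only [lp.coeFn_add, Pi.add_apply, add_smul]
    exact (summable_smul_of_norm_le_one hy x).tsum_add (summable_smul_of_norm_le_one hy z)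
  map_smul' c x := by
    simp only [lp.coeFn_smul, Pi.smul_apply, smul_eq_mul, mul_smul, RingHom.id_apply]
    exact (summable_smul_of_norm_le_one hy x).tsum_const_smul c

theorem norm_l1Synthesis_le (hy : ∀ i, ‖y i‖ ≤ 1) (x : ℓ¹(ι, ℝ)) :
    ‖l1Synthesis hy x‖ ≤ ‖x‖ := by
  rw [lp.norm_eq_tsum_norm_of_one]
  exact tsum_of_norm_bounded (lp.summable_norm_of_one x).hasSum (norm_smul_le_of_norm_le_one hy x)

theorem norm_le_norm_l1Synthesis (hy : ∀ i, ‖y i‖ ≤ 1)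
    (hsign : ∀ ε : ι → Bool, ∃ f : StrongDual ℝ Y, ‖f‖ ≤ 1 ∧ ∀ i, f (y i) = signOf (ε i))
    (x : ℓ¹(ι, ℝ)) : ‖x‖ ≤ ‖l1Synthesis hy x‖ := by
  obtain ⟨f, hf, hfy⟩ := hsign fun i => decide (0 ≤ x i)
  calc ‖x‖ = ∑' i, x i * signOf (decide (0 ≤ x i)) := by
        simp only [mul_signOf_decide_nonneg, lp.norm_eq_tsum_norm_of_one, Real.norm_eq_abs]
    _ = f (l1Synthesis hy x) := by
        simp only [l1Synthesis, LinearMap.coe_mk, AddHom.coe_mk,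
          f.map_tsum (summable_smul_of_norm_le_one hy x), map_smul, hfy, smul_eq_mul]
    _ ≤ ‖l1Synthesis hy x‖ := f.apply_le_norm_of_norm_le_one hf _

noncomputable def l1LinearIsometry (hy : ∀ i, ‖y i‖ ≤ 1)
    (hsign : ∀ ε : ι → Bool, ∃ f : StrongDual ℝ Y, ‖f‖ ≤ 1 ∧ ∀ i, f (y i) = signOf (ε i)) :
    ℓ¹(ι, ℝ) →ₗᵢ[ℝ] Y :=
  ⟨l1Synthesis hy, fun x =>
    (norm_l1Synthesis_le hy x).antisymm (norm_le_norm_l1Synthesis hy hsign x)⟩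

end Synthesis

section Cube

variable {ι : Type*} (w : ℓ¹(ι, ℝ))

noncomputable def cubeVertex (σ : ι → Bool) : ℓ¹(ι, ℝ) :=
  ⟨fun i => signOf (σ i) * w i, (lp.memℓp w).mono' fun i => by simp [abs_signOf]⟩

def cube : Set ℓ¹(ι, ℝ) := Set.range (cubeVertex w)

theorem continuous_cubeVertex : Continuous (cubeVertex w) := by
  classical
  have hsum : ∀ σ, ∑' i, lp.single 1 i (signOf (σ i) * w i) = cubeVertex w σ := fun σ =>
    (lp.hasSum_single ENNReal.one_ne_top (cubeVertex w σ)).tsum_eq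
  refine funext hsum ▸ continuous_tsum (u := fun i => ‖w i‖) (fun i => ?_) ?_ fun i σ => ?_
  · exact (continuous_of_discreteTopology
      (f := fun b : Bool => (lp.single 1 i (signOf b * w i) : ℓ¹(ι, ℝ)))).comp (continuous_apply i)
  · simpa using (lp.memℓp w).summable (by simp)
  · simp [lp.norm_single, abs_signOf]

theorem isCompact_cube : IsCompact (cube w) :=
  isCompact_range (continuous_cubeVertex w)

theorem hasSum_dist_cubeVertex (σ τ : ι → Bool) :
    HasSum (fun i => |signOf (σ i) - signOf (τ i)| * |w i|)
      (dist (cubeVertex w σ) (cubeVertex w τ)) := by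
  rw [dist_eq_norm, lp.norm_eq_tsum_norm_of_one]
  convert (lp.summable_norm_of_one (cubeVertex w σ - cubeVertex w τ)).hasSum using 2 with i
  show _ = |(signOf (σ i) * w i) - (signOf (τ i) * w i)|
  rw [← sub_mul, abs_mul]

theorem dist_cubeVertex_add_dist_cubeVertex_not (ε σ : ι → Bool) :
    dist (cubeVertex w ε) (cubeVertex w σ) + dist (cubeVertex w σ) (cubeVertex w (fun i => !ε i))
      = dist (cubeVertex w ε) (cubeVertex w (fun i => !ε i)) := by
  refine ((hasSum_dist_cubeVertex w ε σ).add (hasSum_dist_cubeVertex w σ _)).unique ?_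
  convert hasSum_dist_cubeVertex w ε (fun i => !ε i) using 2 with i
  cases ε i <;> cases σ i <;> norm_num [signOf]

theorem dist_cubeVertex_update_sub [DecidableEq ι] (ε : ι → Bool) (i : ι) :
    dist (cubeVertex w ε) (cubeVertex w (Function.update (fun _ => true) i false))
      - dist (cubeVertex w ε) (cubeVertex w (fun _ => true)) = 2 * signOf (ε i) * |w i| := by
  refine ((hasSum_dist_cubeVertex w _ _).sub (hasSum_dist_cubeVertex w _ _)).unique ?_
  convert hasSum_pi_single i (2 * signOf (ε i) * |w i|) using 1
  · rfl
  · funext k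
    by_cases hk : k = i
    · subst hk; cases ε k <;> norm_num [signOf]
    · simp [hk]

end Cube

section Embedding

variable {ι Y : Type*} [NormedAddCommGroup Y] {w : ℓ¹(ι, ℝ)} {J : (ι → Bool) → Y}
  (hJ : ∀ σ τ, dist (J σ) (J τ) = dist (cubeVertex w σ) (cubeVertex w τ))
include hJ

theorem norm_cubeEdge [DecidableEq ι] (i : ι) :
    ‖J (fun _ => true) - J (Function.update (fun _ => true) i false)‖ = 2 * |w i| := by
  rw [← dist_eq_norm, hJ]
  simpa [signOf] using dist_cubeVertex_update_sub w (fun _ => true) i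

variable [NormedSpace ℝ Y]

theorem exists_dual_apply_sub_eq_dist_cubeVertex (ε : ι → Bool) :
    ∃ f : StrongDual ℝ Y, ‖f‖ ≤ 1 ∧
      ∀ σ, f (J ε - J σ) = dist (cubeVertex w ε) (cubeVertex w σ) := by
  obtain ⟨f, hf, hfε⟩ := exists_dual_vector'' ℝ (J ε - J fun i => !ε i)
  refine ⟨f, hf, fun σ => ?_⟩
  rw [← hJ]
  refine f.apply_sub_eq_dist_of_dist_add_dist_eq hf ?_ (by rw [hfε, dist_eq_norm]; rfl)
  simpa only [hJ] using dist_cubeVertex_add_dist_cubeVertex_not w ε σ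

theorem exists_dual_apply_cubeEdge_eq [DecidableEq ι] (ε : ι → Bool) :
    ∃ f : StrongDual ℝ Y, ‖f‖ ≤ 1 ∧ ∀ i,
      f (J (fun _ => true) - J (Function.update (fun _ => true) i false))
        = 2 * signOf (ε i) * |w i| := by
  obtain ⟨f, hf, hfε⟩ := exists_dual_apply_sub_eq_dist_cubeVertex hJ ε
  refine ⟨f, hf, fun i => ?_⟩
  rw [← dist_cubeVertex_update_sub, ← hfε, ← hfε, ← map_sub, sub_sub_sub_cancel_left]

theorem nonempty_linearIsometry_of_cube_embedding [CompleteSpace Y] (hw : ∀ i, w i ≠ 0) :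
    Nonempty (ℓ¹(ι, ℝ) →ₗᵢ[ℝ] Y) := by
  classical
  set y : ι → Y := fun i =>
    (2 * |w i|)⁻¹ • (J (fun _ => true) - J (Function.update (fun _ => true) i false))
  have hwi : ∀ i, 2 * |w i| ≠ 0 := fun i => by simpa using hw i
  have hy : ∀ i, ‖y i‖ ≤ 1 := fun i => le_of_eq <| by
    rw [norm_smul, norm_cubeEdge hJ, norm_inv, Real.norm_of_nonneg (by positivity),
      inv_mul_cancel₀ (hwi i)]
  refine ⟨l1LinearIsometry hy fun ε => ?_⟩
  obtain ⟨f, hf, hfε⟩ := exists_dual_apply_cubeEdge_eq hJ ε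
  refine ⟨f, hf, fun i => ?_⟩
  rw [map_smul, hfε, smul_eq_mul, mul_right_comm, inv_mul_cancel_left₀ (hwi i)]

end Embedding

theorem nonempty_linearIsometry_of_isometry_cube {ι Y : Type*} [NormedAddCommGroup Y]
    [NormedSpace ℝ Y] [CompleteSpace Y] {w : ℓ¹(ι, ℝ)} (hw : ∀ i, w i ≠ 0) {j : cube w → Y}
    (hj : Isometry j) : Nonempty (ℓ¹(ι, ℝ) →ₗᵢ[ℝ] Y) :=
  nonempty_linearIsometry_of_cube_embedding (J := j ∘ Set.rangeFactorization (cubeVertex w))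
    (fun _ _ => hj.dist_eq _ _) hw

/-- There is a compact subset `K` of `ℓ₁` such that whenever `K` embeds
isometrically into a real Banach space `Y`, then `ℓ₁` is linearly isometric to a subspace
of `Y`. -/
theorem stmt10 :
    ∃ K : Set (lp (fun _ : ℕ => ℝ) 1), IsCompact K ∧
      ∀ (Y : Type u) [NormedAddCommGroup Y] [NormedSpace ℝ Y] [CompleteSpace Y],
        (∃ j : K → Y, Isometry j) → Nonempty (lp (fun _ : ℕ => ℝ) 1 →ₗᵢ[ℝ] Y) := by
  let w : ℓ¹(ℕ, ℝ) := ⟨fun n => (1 / 2) ^ n, memℓp_gen (by simpa using summable_geometric_two)⟩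
  refine ⟨cube w, isCompact_cube w, fun Y _ _ _ ⟨j, hj⟩ => ?_⟩
  exact nonempty_linearIsometry_of_isometry_cube (fun n => by simp [w]) hj
end

section
/- For subsets A, B of ℕ (with ℕ starting at 1), let μ(A) = Σ_{k ∈ A} 2^{−k} and d(A, B) = μ(A \ B) + μ(B \ A), a metric on the power set K of ℕ. Let Y be a real Banach space and j : K → Y a distance-preserving map with j(∅) = 0. Set y_n = 2^n · j({n}) for each n ∈ ℕ. Then the linear map T : ℓ₁ → Y defined by T(α) = Σ_k α_k y_k is a linear isometric embedding of ℓ₁ into Y. -/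
/-!
For finite sets, `d(A, B) = d(A, C) + d(C, B)` whenever `A ∩ B ⊆ C ⊆ A ∪ B`, and a functional
of norm `≤ 1` that attains `d(x, z)` on `x - z` also attains the distance on each leg of a
metric segment `x, y, z`. For disjoint finite `A`, `B`, a norming functional `f` of `j A - j B`
(Hahn–Banach) therefore attains the distances along the chains `A, {k}, ∅, B` and
`A, ∅, {k}, B`, which forces `f (2^(k+1) • j {k}) = 1` on `A` and `= -1` on `B`. Taking `A`, `B`
to be the positive and negative supports of a finitely supported `α` gives
`‖∑ α k • y k‖ ≥ f (∑ α k • y k) = ∑ |α k|`; the reverse inequality is the triangle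
inequality, and the identity passes from finite sums to `ℓ¹` by continuity.
-/

open Finset

noncomputable def muSet (A : Set ℕ) : ℝ := ∑' k : A, ((1 : ℝ) / 2) ^ ((k : ℕ) + 1)

noncomputable def dSet (A B : Set ℕ) : ℝ := muSet (A \ B) + muSet (B \ A)

section Dual

variable {E : Type*} [SeminormedAddCommGroup E] [NormedSpace ℝ E]

lemma ContinuousLinearMap.apply_le_norm {f : StrongDual ℝ E} (hf : ‖f‖ ≤ 1) (x : E) :
    f x ≤ ‖x‖ :=
  calc f x ≤ ‖f x‖ := le_abs_self _
    _ ≤ ‖f‖ * ‖x‖ := f.le_opNorm _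
    _ ≤ ‖x‖ := mul_le_of_le_one_left (norm_nonneg _) hf

lemma ContinuousLinearMap.apply_sub_le_dist {f : StrongDual ℝ E} (hf : ‖f‖ ≤ 1) (x y : E) :
    f (x - y) ≤ dist x y :=
  dist_eq_norm x y ▸ f.apply_le_norm hf _

lemma ContinuousLinearMap.apply_sub_eq_dist_of_dist_eq_add {f : StrongDual ℝ E} (hf : ‖f‖ ≤ 1)
    {x y z : E} (hxz : f (x - z) = dist x z) (hxyz : dist x z = dist x y + dist y z) :
    f (x - y) = dist x y ∧ f (y - z) = dist y z := by
  have hsum : f (x - y) + f (y - z) = f (x - z) := by rw [← map_add, sub_add_sub_cancel]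
  have hxy := f.apply_sub_le_dist hf x y
  have hyz := f.apply_sub_le_dist hf y z
  constructor <;> linarith

end Dual

lemma muSet_coe_finset (s : Finset ℕ) : muSet s = ∑ k ∈ s, ((1 : ℝ) / 2) ^ (k + 1) :=
  Finset.tsum_subtype s fun k => ((1 : ℝ) / 2) ^ (k + 1)

lemma dSet_coe_finset (s t : Finset ℕ) :
    dSet s t = ∑ k ∈ s \ t, ((1 : ℝ) / 2) ^ (k + 1) + ∑ k ∈ t \ s, ((1 : ℝ) / 2) ^ (k + 1) := by
  rw [dSet, ← coe_sdiff, ← coe_sdiff, muSet_coe_finset, muSet_coe_finset]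

lemma dSet_comm (A B : Set ℕ) : dSet A B = dSet B A :=
  add_comm _ _

lemma dSet_singleton_empty (k : ℕ) : dSet {k} ∅ = ((1 : ℝ) / 2) ^ (k + 1) := by
  simpa using dSet_coe_finset {k} ∅

lemma dSet_coe_finset_eq_add {s t u : Finset ℕ} (hu : s ∩ t ⊆ u) (hu' : u ⊆ s ∪ t) :
    dSet s t = dSet s u + dSet u t := by
  have hst : s \ t = s \ u ∪ u \ t := by grind
  have hts : t \ s = t \ u ∪ u \ s := by grind
  have hdisj : ∀ a b c : Finset ℕ, Disjoint (a \ b) (b \ c) :=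
    fun a b c => disjoint_sdiff_self_left.mono_right sdiff_subset
  simp only [dSet_coe_finset, hst, hts, sum_union (hdisj _ _ _)]
  ring

section Isometry

variable {Y : Type*} [NormedAddCommGroup Y] [NormedSpace ℝ Y] {j : Set ℕ → Y}

lemma apply_sub_eq_dSet_of_between (hj : ∀ A B : Set ℕ, dist (j A) (j B) = dSet A B)
    {f : StrongDual ℝ Y} (hf : ‖f‖ ≤ 1) {s t u : Finset ℕ}
    (hst : f (j s - j t) = dSet s t) (hu : s ∩ t ⊆ u) (hu' : u ⊆ s ∪ t) :
    f (j s - j u) = dSet s u ∧ f (j u - j t) = dSet u t := by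
  simp only [← hj] at hst ⊢
  exact f.apply_sub_eq_dist_of_dist_eq_add hf hst
    (by simp only [hj, dSet_coe_finset_eq_add hu hu'])

lemma exists_dual_apply_singleton_eq_sign (hj : ∀ A B : Set ℕ, dist (j A) (j B) = dSet A B)
    (hj0 : j ∅ = 0) {A B : Finset ℕ} (hAB : Disjoint A B) :
    ∃ f : StrongDual ℝ Y, ‖f‖ ≤ 1 ∧ (∀ k ∈ A, f (j {k}) = ((1 : ℝ) / 2) ^ (k + 1)) ∧
      ∀ k ∈ B, f (j {k}) = -((1 : ℝ) / 2) ^ (k + 1) := by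
  obtain ⟨f, hf, hfAB⟩ := exists_dual_vector'' ℝ (j A - j B)
  have hAB' : f (j A - j B) = dSet A B := by rw [hfAB, ← dist_eq_norm, hj]; rfl
  obtain ⟨hA0, h0B⟩ := apply_sub_eq_dSet_of_between hj hf hAB' (u := ∅)
    (by simp [disjoint_iff_inter_eq_empty.mp hAB]) (empty_subset _)
  refine ⟨f, hf, fun k hk => ?_, fun k hk => ?_⟩
  · have := (apply_sub_eq_dSet_of_between hj hf hA0 (u := {k}) (by simp) (by simpa)).2
    simpa [hj0, dSet_singleton_empty] using this
  · have := (apply_sub_eq_dSet_of_between hj hf h0B (u := {k}) (by simp) (by simpa)).1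
    rw [dSet_comm, coe_singleton, coe_empty, dSet_singleton_empty, hj0, zero_sub, map_neg] at this
    linarith

lemma norm_two_pow_smul_apply_singleton (hj : ∀ A B : Set ℕ, dist (j A) (j B) = dSet A B)
    (hj0 : j ∅ = 0) (k : ℕ) : ‖(2 : ℝ) ^ (k + 1) • j {k}‖ = 1 := by
  have hk : ‖j {k}‖ = ((1 : ℝ) / 2) ^ (k + 1) := by
    rw [← dist_zero_right, ← hj0, hj, dSet_singleton_empty]
  rw [norm_smul, hk, Real.norm_of_nonneg (by positivity), ← mul_pow]
  norm_num

lemma norm_sum_smul_two_pow_smul_apply_singleton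
    (hj : ∀ A B : Set ℕ, dist (j A) (j B) = dSet A B) (hj0 : j ∅ = 0) (F : Finset ℕ)
    (c : ℕ → ℝ) : ‖∑ k ∈ F, c k • (2 : ℝ) ^ (k + 1) • j {k}‖ = ∑ k ∈ F, |c k| := by
  refine le_antisymm ?_ ?_
  · calc _ ≤ ∑ k ∈ F, ‖c k • (2 : ℝ) ^ (k + 1) • j {k}‖ := norm_sum_le _ _
      _ = _ := by
        simp only [norm_smul _ ((2 : ℝ) ^ _ • _), norm_two_pow_smul_apply_singleton hj hj0,
          mul_one, Real.norm_eq_abs]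
  · obtain ⟨f, hf, hfA, hfB⟩ := exists_dual_apply_singleton_eq_sign hj hj0
      (A := F.filter (0 < c ·)) (B := F.filter (c · < 0))
      (disjoint_filter.2 fun _ _ hpos hneg => lt_asymm hpos hneg)
    have hterm : ∀ k ∈ F, f (c k • (2 : ℝ) ^ (k + 1) • j {k}) = |c k| := by
      intro k hk
      have h2 : (2 : ℝ) ^ (k + 1) * ((1 : ℝ) / 2) ^ (k + 1) = 1 := by rw [← mul_pow]; norm_num
      simp only [map_smul, smul_eq_mul]
      rcases lt_trichotomy (c k) 0 with hneg | hzero | hpos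
      · rw [hfB k (mem_filter.2 ⟨hk, hneg⟩), abs_of_neg hneg]
        linear_combination (-c k) * h2
      · simp [hzero]
      · rw [hfA k (mem_filter.2 ⟨hk, hpos⟩), abs_of_pos hpos]
        linear_combination c k * h2
    calc ∑ k ∈ F, |c k| = f (∑ k ∈ F, c k • (2 : ℝ) ^ (k + 1) • j {k}) := by
          rw [map_sum]; exact (sum_congr rfl hterm).symm
      _ ≤ _ := f.apply_le_norm hf _

end Isometry

section LpOne

variable {ι Y : Type*} [NormedAddCommGroup Y] [NormedSpace ℝ Y] {y : ι → Y}

lemma summable_abs_lp_one (α : lp (fun _ : ι => ℝ) 1) : Summable fun k => |α k| := by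
  simpa using (lp.memℓp α).summable one_pos

lemma norm_lp_one_eq_tsum_abs (α : lp (fun _ : ι => ℝ) 1) : ‖α‖ = ∑' k, |α k| := by
  rw [lp.norm_eq_tsum_rpow (by norm_num)]
  simp

lemma summable_lp_one_smul [CompleteSpace Y] (hy : ∀ k, ‖y k‖ ≤ 1) (α : lp (fun _ : ι => ℝ) 1) :
    Summable fun k => α k • y k :=
  .of_norm_bounded (summable_abs_lp_one α) fun k => by
    simpa [norm_smul] using mul_le_of_le_one_right (abs_nonneg (α k)) (hy k)

lemma norm_eq_one_of_norm_sum_smul_eq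
    (hy : ∀ (F : Finset ι) (c : ι → ℝ), ‖∑ k ∈ F, c k • y k‖ = ∑ k ∈ F, |c k|) (k : ι) :
    ‖y k‖ = 1 := by
  simpa using hy {k} 1

lemma norm_tsum_lp_one_smul [CompleteSpace Y]
    (hy : ∀ (F : Finset ι) (c : ι → ℝ), ‖∑ k ∈ F, c k • y k‖ = ∑ k ∈ F, |c k|)
    (α : lp (fun _ : ι => ℝ) 1) : ‖∑' k, α k • y k‖ = ‖α‖ := by
  have hy1 k := (norm_eq_one_of_norm_sum_smul_eq hy k).le
  rw [norm_lp_one_eq_tsum_abs]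
  refine tendsto_nhds_unique ((summable_lp_one_smul hy1 α).hasSum.norm) ?_
  simp only [hy]
  exact (summable_abs_lp_one α).hasSum

noncomputable def lpOneTsumSmul [CompleteSpace Y]
    (hy : ∀ (F : Finset ι) (c : ι → ℝ), ‖∑ k ∈ F, c k • y k‖ = ∑ k ∈ F, |c k|) :
    lp (fun _ : ι => ℝ) 1 →ₗᵢ[ℝ] Y where
  toFun α := ∑' k, α k • y k
  map_add' α β := by
    have hsummable := summable_lp_one_smul fun k => (norm_eq_one_of_norm_sum_smul_eq hy k).le
    rw [← (hsummable α).tsum_add (hsummable β)]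
    simp [add_smul]
  map_smul' c α := by
    have hsummable := summable_lp_one_smul fun k => (norm_eq_one_of_norm_sum_smul_eq hy k).le
    rw [RingHom.id_apply, ← (hsummable α).tsum_const_smul c]
    simp [smul_smul]
  norm_map' := norm_tsum_lp_one_smul hy

end LpOne

/-- Let `Y` be a real Banach space and `j` a distance-preserving map from
`(𝒫(ℕ), d)` into `Y` with `j ∅ = 0`. With `y_n = 2ⁿ • j {n}`, the map
`T : ℓ₁ → Y`, `T α = Σ_k α_k y_k`, is a linear isometric embedding of `ℓ₁` into `Y`. -/
theorem stmt12 (Y : Type*) [NormedAddCommGroup Y] [NormedSpace ℝ Y] [CompleteSpace Y]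
    (j : Set ℕ → Y) (hj : ∀ A B : Set ℕ, dist (j A) (j B) = dSet A B)
    (hj0 : j ∅ = 0) :
    ∃ T : lp (fun _ : ℕ => ℝ) 1 →ₗᵢ[ℝ] Y,
      ∀ α : lp (fun _ : ℕ => ℝ) 1,
        T α = ∑' k : ℕ, (α : ∀ _ : ℕ, ℝ) k • ((2 : ℝ) ^ (k + 1) • j {k}) :=
  ⟨lpOneTsumSmul (norm_sum_smul_two_pow_smul_apply_singleton hj hj0), fun _ => rfl⟩
end

section
/- Let X be a real normed space, φ ∈ X with ‖φ‖ = 1, and let M be a subset of X containing the segment {λφ : λ ∈ [−1, 1]}. Let Y be a real Banach space and j : M → Y a distance-preserving map (with respect to the norm metric on M) with j(0) = 0. Let y* be a continuous linear functional on Y with ‖y*‖ = 1 and y*(j(φ) − j(−φ)) = 2. Then y*(j(λφ)) = λ for every λ ∈ [−1, 1]. -/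
/-- Let `X` be a real normed space, `φ ∈ X` with `‖φ‖ = 1`, and `M ⊆ X`
containing the segment `{λ • φ : λ ∈ [-1, 1]}`. Let `j : M → Y` be a distance-preserving map
into a real Banach space `Y` with `j 0 = 0`, and let `y*` be a norm-one functional on `Y` with
`y* (j φ - j (-φ)) = 2`. Then `y* (j (λ • φ)) = λ` for every `λ ∈ [-1, 1]`. -/
theorem stmt13 (X : Type*) [NormedAddCommGroup X] [NormedSpace ℝ X]
    (Y : Type*) [NormedAddCommGroup Y] [NormedSpace ℝ Y] [CompleteSpace Y]
    (φ : X) (hφ : ‖φ‖ = 1) (M : Set X)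
    (hM : ∀ l : ℝ, l ∈ Set.Icc (-1 : ℝ) 1 → l • φ ∈ M)
    (j : M → Y) (hj : Isometry j)
    (hj0 : j ⟨0, by simpa using hM 0 (by norm_num)⟩ = 0)
    (y : Y →L[ℝ] ℝ) (hy : ‖y‖ = 1)
    (hy2 : y (j ⟨φ, by simpa using hM 1 (by norm_num)⟩ -
            j ⟨-φ, by simpa using hM (-1) (by norm_num)⟩) = 2) :
    ∀ (l : ℝ) (hl : l ∈ Set.Icc (-1 : ℝ) 1), y (j ⟨l • φ, hM l hl⟩) = l := by
  intro l hl
  have key : ∀ (a : ℝ) (ha : a ∈ Set.Icc (-1 : ℝ) 1) (b : ℝ) (hb : b ∈ Set.Icc (-1 : ℝ) 1),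
      y (j ⟨a • φ, hM a ha⟩) - y (j ⟨b • φ, hM b hb⟩) ≤ |a - b| := by
    intro a ha b hb
    have h1 : y (j ⟨a • φ, hM a ha⟩) - y (j ⟨b • φ, hM b hb⟩)
        = y (j ⟨a • φ, hM a ha⟩ - j ⟨b • φ, hM b hb⟩) := by simp
    rw [h1]
    have h2 : y (j ⟨a • φ, hM a ha⟩ - j ⟨b • φ, hM b hb⟩)
        ≤ ‖y‖ * ‖j ⟨a • φ, hM a ha⟩ - j ⟨b • φ, hM b hb⟩‖ :=
      le_trans (le_abs_self _) (y.le_opNorm _)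
    have h3 : ‖j ⟨a • φ, hM a ha⟩ - j ⟨b • φ, hM b hb⟩‖ = |a - b| := by
      rw [← dist_eq_norm, hj.dist_eq, Subtype.dist_eq, dist_eq_norm]
      show ‖a • φ - b • φ‖ = _
      rw [← sub_smul, norm_smul, hφ, mul_one, Real.norm_eq_abs]
    rw [hy, h3, one_mul] at h2
    exact h2
  have p1 : (1 : ℝ) ∈ Set.Icc (-1 : ℝ) 1 := by norm_num
  have pm : (-1 : ℝ) ∈ Set.Icc (-1 : ℝ) 1 := by norm_num
  have p0 : (0 : ℝ) ∈ Set.Icc (-1 : ℝ) 1 := by norm_num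
  have f0 : y (j ⟨(0:ℝ) • φ, hM 0 p0⟩) = 0 := by
    have h : (⟨(0:ℝ) • φ, hM 0 p0⟩ : M) = ⟨0, by simpa using hM 0 (by norm_num)⟩ :=
      Subtype.ext (zero_smul ℝ φ)
    rw [h, hj0, map_zero]
  have f1m : y (j ⟨(1:ℝ) • φ, hM 1 p1⟩) - y (j ⟨(-1:ℝ) • φ, hM (-1) pm⟩) = 2 := by
    have e1 : (⟨(1:ℝ) • φ, hM 1 p1⟩ : M) = ⟨φ, by simpa using hM 1 (by norm_num)⟩ :=
      Subtype.ext (one_smul ℝ φ)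
    have em : (⟨(-1:ℝ) • φ, hM (-1) pm⟩ : M) = ⟨-φ, by simpa using hM (-1) (by norm_num)⟩ :=
      Subtype.ext (by simp)
    rw [e1, em, ← map_sub, hy2]
  have h10 := key 1 p1 0 p0
  have h0m := key 0 p0 (-1) pm
  rw [f0] at h10 h0m
  have ha1 : |(1:ℝ) - 0| = 1 := by norm_num
  have ha2 : |(0:ℝ) - (-1)| = 1 := by norm_num
  have h1l := key 1 p1 l hl
  have hlm := key l hl (-1) pm
  have ha3 : |(1:ℝ) - l| = 1 - l := abs_of_nonneg (by linarith [hl.2])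
  have ha4 : |l - (-1:ℝ)| = l + 1 := by
    rw [show l - (-1:ℝ) = l + 1 by ring]; exact abs_of_nonneg (by linarith [hl.1])
  rw [ha1] at h10
  rw [ha2] at h0m
  rw [ha3] at h1l
  rw [ha4] at hlm
  linarith
end

section
/- Let X be a finite-dimensional real normed space and let x₁*, …, x_k* be norm-one continuous linear functionals on X such that the closed unit ball of X equals the intersection over i of the sets {x : |x_i*(x)| ≤ 1}. Suppose that for each i ∈ {1, …, k} there exists x_i ∈ X with ‖x_i‖ = 1, x_i*(x_i) = 1, and |x_l*(x_i)| < 1 for all l ≠ i. Then there exists r ∈ (0, 1/2] such that for every i ∈ {1, …, k} and every x ∈ X with ‖x − x_i‖ ≤ 4r, one has ‖x‖ = x_i*(x). -/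
/-- Let `X` be a finite-dimensional real normed space, with norm-one
functionals `x₁*, …, x_k*` such that `B_X = ⋂ᵢ {x : |xᵢ* x| ≤ 1}`, and points `xᵢ ∈ S_X` with
`xᵢ* xᵢ = 1` and `|x_l* xᵢ| < 1` for `l ≠ i`. Then there is `r ∈ (0, 1/2]` such that for every
`i` and every `x` with `‖x - xᵢ‖ ≤ 4r`, one has `‖x‖ = xᵢ* x`. -/
theorem stmt14 (X : Type*) [NormedAddCommGroup X] [NormedSpace ℝ X] [FiniteDimensional ℝ X]
    (k : ℕ) (xs : Fin k → (X →L[ℝ] ℝ)) (hxs : ∀ i, ‖xs i‖ = 1)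
    (hball : Metric.closedBall (0 : X) 1 = ⋂ i, {x : X | |xs i x| ≤ 1})
    (x : Fin k → X) (hx : ∀ i, ‖x i‖ = 1) (hx1 : ∀ i, xs i (x i) = 1)
    (hx2 : ∀ i l, l ≠ i → |xs l (x i)| < 1) :
    ∃ r ∈ Set.Ioc (0 : ℝ) (1 / 2),
      ∀ (i : Fin k) (z : X), ‖z - x i‖ ≤ 4 * r → ‖z‖ = xs i z := by
  obtain ⟨ε, hε0, hε1, hεlt⟩ :
      ∃ ε : ℝ, 0 < ε ∧ ε ≤ 1 ∧ ∀ i l, l ≠ i → |xs l (x i)| ≤ 1 - ε := by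
    rcases Nat.eq_zero_or_pos k with hk | hk
    · subst hk
      exact ⟨1, one_pos, le_refl 1, fun i => i.elim0⟩
    · have hne : Nonempty (Fin k) := ⟨⟨0, hk⟩⟩
      set g : Fin k × Fin k → ℝ := fun p => if p.2 = p.1 then 0 else |xs p.2 (x p.1)| with hg
      set M : ℝ := Finset.univ.sup' Finset.univ_nonempty g with hM
      have hM1 : M < 1 := by
        rw [hM, Finset.sup'_lt_iff]
        intro p _
        by_cases h : p.2 = p.1
        · simp [hg, h]
        · simpa [hg, h] using hx2 p.1 p.2 h
      have hM0 : 0 ≤ M := by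
        have i0 : Fin k := ⟨0, hk⟩
        have : g (i0, i0) ≤ M := Finset.le_sup' g (Finset.mem_univ _)
        simpa [hg] using this
      refine ⟨1 - M, by linarith, by linarith, fun i l hli => ?_⟩
      have : g (i, l) ≤ M := Finset.le_sup' g (Finset.mem_univ _)
      simp only [hg, if_neg hli] at this
      linarith
  refine ⟨min (1 / 2) (ε / 8), ⟨by positivity, min_le_left _ _⟩, fun i z hz => ?_⟩
  have hr8 : 4 * min (1 / 2) (ε / 8) ≤ ε / 2 := by
    have := min_le_right (1 / 2 : ℝ) (ε / 8); linarith
  have hz' : ‖z - x i‖ ≤ ε / 2 := hz.trans hr8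
  -- lower bound for xs i z
  have hdiff : ∀ l, |xs l (z - x i)| ≤ ε / 2 := fun l => by
    calc |xs l (z - x i)| ≤ ‖xs l‖ * ‖z - x i‖ := (xs l).le_opNorm _
    _ ≤ 1 * (ε / 2) := by rw [hxs l]; linarith
    _ = ε / 2 := one_mul _
  have hlow : 1 - ε / 2 ≤ xs i z := by
    have h1 : |xs i (z - x i)| ≤ ε / 2 := hdiff i
    have h2 : xs i (z - x i) = xs i z - 1 := by rw [map_sub, hx1 i]
    rw [h2, abs_le] at h1
    linarith
  have hpos : 0 < xs i z := by linarith
  -- xs i z dominates all |xs l z|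
  have hdom : ∀ l, |xs l z| ≤ xs i z := by
    intro l
    by_cases hli : l = i
    · subst hli; rw [abs_of_pos hpos]
    · have h1 := hdiff l
      have h2 := hεlt i l hli
      have : |xs l z| ≤ |xs l (x i)| + |xs l (z - x i)| := by
        calc |xs l z| = |xs l (x i) + xs l (z - x i)| := by rw [← map_add, add_sub_cancel]
        _ ≤ _ := abs_add_le _ _
      linarith
  -- upper bound: ‖z‖ ≤ xs i z
  have hub : ‖z‖ ≤ xs i z := by
    set c := xs i z
    have hmem : c⁻¹ • z ∈ Metric.closedBall (0 : X) 1 := by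
      rw [hball, Set.mem_iInter]
      intro l
      have : |xs l (c⁻¹ • z)| = c⁻¹ * |xs l z| := by
        rw [map_smul, smul_eq_mul, abs_mul, abs_of_pos (inv_pos.mpr hpos)]
      simp only [Set.mem_setOf_eq, this]
      rw [inv_mul_le_iff₀ hpos, mul_one]
      exact hdom l
    rw [Metric.mem_closedBall, dist_zero_right, norm_smul, norm_inv,
      Real.norm_of_nonneg hpos.le, inv_mul_le_iff₀ hpos, mul_one] at hmem
    exact hmem
  have hlb : xs i z ≤ ‖z‖ := by
    calc xs i z ≤ |xs i z| := le_abs_self _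
    _ ≤ ‖xs i‖ * ‖z‖ := (xs i).le_opNorm _
    _ = ‖z‖ := by rw [hxs i, one_mul]
  linarith
end

section
/- Let (R, d) be a compact metric space of diameter at most 1, K = {f ∈ C(R) : ‖f‖∞ ≤ 1 and f is 1-Lipschitz}, Y a real Banach space, and j : K → Y a distance-preserving map with j(0) = 0. Fix t ∈ R and define φ_t ∈ C(R) by φ_t(s) = 1 − d(s, t). Let y* be a continuous linear functional on Y with ‖y*‖ = 1 and y*(j(φ_t) − j(−φ_t)) = 2. Then for every φ ∈ C(R) with ‖φ‖∞ ≤ 1/5 and Lipschitz constant at most 1/5, one has y*(j(φ)) = φ(t). -/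
/-! A norm-one functional `y*` composed with the isometry `j` is a 1-Lipschitz function `g` on `K`
with `g 0 = 0`; hence `g φ_t ≤ ‖φ_t‖ ≤ 1` and `g (-φ_t) ≥ -1`, and the normalisation
`g φ_t - g (-φ_t) = 2` forces `g (±φ_t) = ±1`. Once `φ` is 1-Lipschitz with `‖φ‖ ≤ 1/2`
(on a space of diameter `≤ 1`), `‖φ_t ∓ φ‖ ≤ 1 ∓ φ(t)`, so `g φ_t - g φ ≤ 1 - φ(t)` and
`g φ - g (-φ_t) ≤ 1 + φ(t)` squeeze `g φ` to `φ(t)`. -/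

/-- The function `φ_t(s) = 1 - d(s, t)` as a continuous map. -/
noncomputable def phiFn (R : Type*) [MetricSpace R] (t : R) : C(R, ℝ) :=
  ⟨fun s => 1 - dist s t, by continuity⟩

theorem LipschitzWith.eq_of_norm_sub_le_of_norm_add_le {X : Type*} [SeminormedAddCommGroup X]
    {K : Set X} {g : K → ℝ} (hg : LipschitzWith 1 g) (z : K) (hz : (z : X) = 0) (hgz : g z = 0)
    (p q f : K) (hq : (q : X) = -p) (hp : ‖(p : X)‖ ≤ 1) (hpq : g p - g q = 2) {c : ℝ}
    (hpf : ‖(p : X) - f‖ ≤ 1 - c) (hfp : ‖(f : X) + p‖ ≤ 1 + c) : g f = c := by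
  have hle (a b : K) : g a - g b ≤ ‖(a : X) - b‖ := by
    simpa [Real.dist_eq, Subtype.dist_eq, dist_eq_norm] using
      (le_abs_self _).trans (hg.dist_le_mul a b)
  have hpz : g p - g z ≤ 1 := (hle p z).trans (by rwa [hz, sub_zero])
  have hzq : g z - g q ≤ 1 := (hle z q).trans (by rwa [hz, hq, zero_sub, neg_neg])
  have hgf : g p - g f ≤ 1 - c := (hle p f).trans hpf
  have hfq : g f - g q ≤ 1 + c := (hle f q).trans (by rwa [hq, sub_neg_eq_add])
  linarith

section phiFn

variable {R : Type*} [MetricSpace R] (t : R)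

theorem lipschitzWith_phiFn : LipschitzWith 1 (phiFn R t) := by
  refine LipschitzWith.of_dist_le_mul fun a b => ?_
  rw [NNReal.coe_one, one_mul, Real.dist_eq, abs_sub_comm]
  simpa [phiFn] using abs_dist_sub_le a b t

variable [CompactSpace R]

theorem norm_phiFn_le (hR : ∀ s, dist s t ≤ 2) : ‖phiFn R t‖ ≤ 1 := by
  refine (ContinuousMap.norm_le _ zero_le_one).2 fun s => ?_
  have := hR s
  have := dist_nonneg (x := s) (y := t)
  simp only [phiFn, ContinuousMap.coe_mk, Real.norm_eq_abs, abs_le]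
  constructor <;> linarith

variable {t}

theorem norm_phiFn_sub_le (hR : ∀ s, dist s t ≤ 1) {φ : C(R, ℝ)} (hφ : ‖φ‖ ≤ 1 / 2)
    (hφL : LipschitzWith 1 φ) : ‖phiFn R t - φ‖ ≤ 1 - φ t := by
  have hφt := abs_le.1 ((φ.norm_coe_le_norm t).trans hφ)
  refine (ContinuousMap.norm_le _ (by linarith)).2 fun s => ?_
  have hφs := abs_le.1 ((φ.norm_coe_le_norm s).trans hφ)
  have hLip := abs_le.1 (by simpa [Real.dist_eq] using hφL.dist_le_mul s t)
  have := hR s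
  simp only [ContinuousMap.sub_apply, phiFn, ContinuousMap.coe_mk, Real.norm_eq_abs, abs_le]
  constructor <;> linarith

theorem norm_add_phiFn_le (hR : ∀ s, dist s t ≤ 1) {φ : C(R, ℝ)} (hφ : ‖φ‖ ≤ 1 / 2)
    (hφL : LipschitzWith 1 φ) : ‖φ + phiFn R t‖ ≤ 1 + φ t := by
  simpa [add_comm] using norm_phiFn_sub_le hR (φ := -φ) (by rwa [norm_neg]) hφL.neg

end phiFn

theorem stmt15_general (R : Type*) [MetricSpace R] [CompactSpace R]
    (hdiam : Metric.diam (Set.univ : Set R) ≤ 1)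
    (K : Set C(R, ℝ)) (hK : K = {f : C(R, ℝ) | ‖f‖ ≤ 1 ∧ LipschitzWith 1 f})
    (Y : Type*) [NormedAddCommGroup Y] [NormedSpace ℝ Y]
    (j : K → Y) (hj : Isometry j)
    (hj0 : ∀ h0 : (0 : C(R, ℝ)) ∈ K, j ⟨0, h0⟩ = 0)
    (t : R) (y : Y →L[ℝ] ℝ) (hy : ‖y‖ = 1)
    (hy2 : ∀ (h1 : phiFn R t ∈ K) (h2 : -phiFn R t ∈ K),
      y (j ⟨phiFn R t, h1⟩ - j ⟨-phiFn R t, h2⟩) = 2) :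
    ∀ (φ : C(R, ℝ)), ‖φ‖ ≤ 1 / 5 → LipschitzWith (1 / 5) φ →
      ∀ hmem : φ ∈ K, y (j ⟨φ, hmem⟩) = φ t := by
  intro φ hφ _ hmem
  have hR (s : R) : dist s t ≤ 1 :=
    (Metric.dist_le_diam_of_mem isCompact_univ.isBounded trivial trivial).trans hdiam
  have hnorm := norm_phiFn_le t fun s => (hR s).trans one_le_two
  have hmemK {f : C(R, ℝ)} : f ∈ K ↔ ‖f‖ ≤ 1 ∧ LipschitzWith 1 f := by rw [hK]; rfl
  have h0 : (0 : C(R, ℝ)) ∈ K := hmemK.2 ⟨by simp, (LipschitzWith.const 0).weaken zero_le_one⟩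
  have hp : phiFn R t ∈ K := hmemK.2 ⟨hnorm, lipschitzWith_phiFn t⟩
  have hq : -phiFn R t ∈ K := hmemK.2 ⟨by rwa [norm_neg], (lipschitzWith_phiFn t).neg⟩
  have hg : LipschitzWith 1 (y ∘ j) := by
    have hy' : ‖y‖₊ = 1 := by ext; simpa using hy
    simpa [hy'] using y.lipschitz.comp hj.lipschitz
  have hφ' : ‖φ‖ ≤ 1 / 2 := hφ.trans (by norm_num)
  have hφL := (hmemK.1 hmem).2
  exact hg.eq_of_norm_sub_le_of_norm_add_le ⟨0, h0⟩ rfl (by simp [hj0]) ⟨_, hp⟩ ⟨_, hq⟩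
    ⟨φ, hmem⟩ rfl hnorm (by simpa using hy2 hp hq) (norm_phiFn_sub_le hR hφ' hφL)
    (norm_add_phiFn_le hR hφ' hφL)

/-- Let `R` be a compact metric space of diameter at most `1`,
`K = {f ∈ C(R) : ‖f‖∞ ≤ 1 and f 1-Lipschitz}`, `Y` a real Banach space, and `j : K → Y` a
distance-preserving map with `j 0 = 0`. Fix `t ∈ R`, and let `y*` be a norm-one functional on
`Y` with `y* (j φ_t - j (-φ_t)) = 2`, where `φ_t(s) = 1 - d(s, t)`. Then for every `φ ∈ C(R)`
with `‖φ‖∞ ≤ 1/5` and Lipschitz constant at most `1/5`, one has `y* (j φ) = φ(t)`. -/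
theorem stmt15 (R : Type*) [MetricSpace R] [CompactSpace R]
    (hdiam : Metric.diam (Set.univ : Set R) ≤ 1)
    (K : Set C(R, ℝ)) (hK : K = {f : C(R, ℝ) | ‖f‖ ≤ 1 ∧ LipschitzWith 1 f})
    (Y : Type*) [NormedAddCommGroup Y] [NormedSpace ℝ Y] [CompleteSpace Y]
    (j : K → Y) (hj : Isometry j)
    (hj0 : ∀ h0 : (0 : C(R, ℝ)) ∈ K, j ⟨0, h0⟩ = 0)
    (t : R) (y : Y →L[ℝ] ℝ) (hy : ‖y‖ = 1)
    (hy2 : ∀ (h1 : phiFn R t ∈ K) (h2 : -phiFn R t ∈ K),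
      y (j ⟨phiFn R t, h1⟩ - j ⟨-phiFn R t, h2⟩) = 2) :
    ∀ (φ : C(R, ℝ)), ‖φ‖ ≤ 1 / 5 → LipschitzWith (1 / 5) φ →
      ∀ hmem : φ ∈ K, y (j ⟨φ, hmem⟩) = φ t :=
  stmt15_general R hdiam K hK Y j hj hj0 t y hy hy2
end

section
/- Let X be a finite-dimensional real normed space and x₁*, …, x_k* norm-one continuous linear functionals on X with the closed unit ball of X equal to the intersection over i of {x : |x_i*(x)| ≤ 1}. Fix i ∈ {1, …, k}, a point x_i ∈ X with ‖x_i‖ = 1 and x_i*(x_i) = 1, and r ∈ (0, 1/2] such that ‖x‖ = x_i*(x) whenever ‖x − x_i‖ ≤ 4r. Let Y be a real Banach space, j a distance-preserving map from the closed unit ball of X into Y with j(0) = 0, and y* a continuous linear functional on Y with ‖y*‖ = 1 such that y*(j(λ x_i)) = λ for all λ ∈ [−1, 1]. Then y*(j(x)) = x_i*(x) for every x ∈ X with ‖x‖ ≤ r. -/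
/-- Let `X` be a finite-dimensional real normed space with norm-one
functionals `x₁*, …, x_k*` such that `B_X = ⋂ᵢ {x : |xᵢ* x| ≤ 1}`. Fix `i`, a point `xᵢ` with
`‖xᵢ‖ = 1` and `xᵢ* xᵢ = 1`, and `r ∈ (0, 1/2]` such that `‖x‖ = xᵢ* x` whenever
`‖x - xᵢ‖ ≤ 4r`. Let `j` be a distance-preserving map from the closed unit ball of `X` into a
real Banach space `Y` with `j 0 = 0`, and let `y*` be a norm-one functional on `Y` with
`y* (j (λ • xᵢ)) = λ` for all `λ ∈ [-1, 1]`. Then `y* (j x) = xᵢ* x` whenever `‖x‖ ≤ r`. -/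
theorem stmt16 (X : Type*) [NormedAddCommGroup X] [NormedSpace ℝ X] [FiniteDimensional ℝ X]
    (k : ℕ) (xs : Fin k → (X →L[ℝ] ℝ)) (hxs : ∀ i, ‖xs i‖ = 1)
    (hball : Metric.closedBall (0 : X) 1 = ⋂ i, {x : X | |xs i x| ≤ 1})
    (i : Fin k) (xi : X) (hxi : ‖xi‖ = 1) (hxi1 : xs i xi = 1)
    (r : ℝ) (hr : r ∈ Set.Ioc (0 : ℝ) (1 / 2))
    (hgood : ∀ z : X, ‖z - xi‖ ≤ 4 * r → ‖z‖ = xs i z)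
    (Y : Type*) [NormedAddCommGroup Y] [NormedSpace ℝ Y] [CompleteSpace Y]
    (j : (Metric.closedBall (0 : X) 1) → Y) (hj : Isometry j)
    (hj0 : ∀ h0 : (0 : X) ∈ Metric.closedBall (0 : X) 1, j ⟨0, h0⟩ = 0)
    (y : Y →L[ℝ] ℝ) (hy : ‖y‖ = 1)
    (hy2 : ∀ (l : ℝ), l ∈ Set.Icc (-1 : ℝ) 1 →
      ∀ hmem : l • xi ∈ Metric.closedBall (0 : X) 1, y (j ⟨l • xi, hmem⟩) = l) :
    ∀ (x : X), ‖x‖ ≤ r →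
      ∀ hmem : x ∈ Metric.closedBall (0 : X) 1, y (j ⟨x, hmem⟩) = xs i x := by
  intro x hxr hmem
  obtain ⟨hr0, hr2⟩ := hr
  have hx4r : ‖x‖ ≤ 4 * r := hxr.trans (by linarith)
  have hximem : xi ∈ Metric.closedBall (0 : X) 1 := by
    simp [Metric.mem_closedBall, dist_zero_right, hxi]
  have hnximem : -xi ∈ Metric.closedBall (0 : X) 1 := by
    simp [Metric.mem_closedBall, dist_zero_right, hxi]
  have h1mem : (1 : ℝ) • xi ∈ Metric.closedBall (0 : X) 1 := by simpa using hximem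
  have hm1mem : (-1 : ℝ) • xi ∈ Metric.closedBall (0 : X) 1 := by
    simpa [neg_one_smul] using hnximem
  -- values at ±xi
  have h1 : y (j ⟨xi, hximem⟩) = 1 := by
    have := hy2 1 (by norm_num) h1mem
    rwa [show (⟨(1:ℝ) • xi, h1mem⟩ : Metric.closedBall (0 : X) 1) = ⟨xi, hximem⟩ from
      Subtype.ext (one_smul ℝ xi)] at this
  have h2 : y (j ⟨-xi, hnximem⟩) = -1 := by
    have := hy2 (-1) (by norm_num) hm1mem
    rwa [show (⟨(-1:ℝ) • xi, hm1mem⟩ : Metric.closedBall (0 : X) 1) = ⟨-xi, hnximem⟩ from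
      Subtype.ext (neg_one_smul ℝ xi)] at this
  -- Lipschitz estimate for y ∘ j
  have key : ∀ a b : Metric.closedBall (0 : X) 1,
      |y (j a) - y (j b)| ≤ ‖(a : X) - (b : X)‖ := by
    intro a b
    calc |y (j a) - y (j b)| = |y (j a - j b)| := by rw [map_sub]
      _ ≤ ‖y‖ * ‖j a - j b‖ := y.le_opNorm _
      _ = ‖j a - j b‖ := by rw [hy, one_mul]
      _ = dist (j a) (j b) := (dist_eq_norm _ _).symm
      _ = dist a b := hj.dist_eq a b
      _ = ‖(a : X) - (b : X)‖ := by rw [Subtype.dist_eq, dist_eq_norm]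
  -- norm computations near xi
  have n1 : ‖x - xi‖ = 1 - xs i x := by
    have h := hgood (xi - x) (by simpa [norm_sub_rev] using hx4r)
    rw [norm_sub_rev, h, map_sub, hxi1]
  have n2 : ‖x + xi‖ = xs i x + 1 := by
    have h := hgood (x + xi) (by simpa using hx4r)
    rw [h, map_add, hxi1]
  have k1 := key ⟨x, hmem⟩ ⟨xi, hximem⟩
  have k2 := key ⟨x, hmem⟩ ⟨-xi, hnximem⟩
  rw [h1] at k1
  rw [h2] at k2
  simp only at k1 k2
  rw [n1] at k1
  simp only [sub_neg_eq_add] at k2; rw [n2] at k2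
  have a1 := abs_le.mp k1
  have a2 := abs_le.mp k2
  linarith [a1.1, a1.2, a2.1, a2.2]
end
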